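/- For every square complex matrix X, (tr|X|)^2 − (tr(Re X))^2 ≥ tr((Im X)^2). -/

import Mathlib

open Matrix
open scoped ComplexOrder

noncomputable section

/-- `Re X = (X + Xᴴ)/2`. -/
def matRe {m : Type*} (X : Matrix m m ℂ) : Matrix m m ℂ := (2⁻¹ : ℂ) • (X + Xᴴ)

/-- `Im X = (X - Xᴴ)/(2i)`. -/
def matIm {m : Type*} (X : Matrix m m ℂ) : Matrix m m ℂ :=
  ((2 * Complex.I)⁻¹ : ℂ) • (X - Xᴴ)

/-- `tr |X|` where `|X| = √(X Xᴴ)`; this equals the sum of the singular values of `X`. -/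
def traceAbs {m : Type*} [Fintype m] [DecidableEq m] (X : Matrix m m ℂ) : ℝ :=
  (((Matrix.posSemidef_self_mul_conjTranspose X).1.eigenvectorUnitary.1 *
    diagonal (((↑) : ℝ → ℂ) ∘ Real.sqrt ∘ (Matrix.posSemidef_self_mul_conjTranspose X).1.eigenvalues) *
    (star (Matrix.posSemidef_self_mul_conjTranspose X).1.eigenvectorUnitary :
      Matrix m m ℂ)).trace).re

/-! ### Auxiliary material -/

lemma star_inv_two_I' : star ((2 * Complex.I)⁻¹ : ℂ) = -(2 * Complex.I)⁻¹ := by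
  simp [map_inv₀, Complex.conj_I, mul_neg]

lemma matIm_herm' {m : Type*} [Fintype m] (Y : Matrix m m ℂ) : (matIm Y)ᴴ = matIm Y := by
  unfold matIm
  rw [conjTranspose_smul, conjTranspose_sub, conjTranspose_conjTranspose, star_inv_two_I',
    neg_smul, ← smul_neg, neg_sub]

lemma entry_id' (p q : ℂ) :
    Complex.normSq ((2 * Complex.I)⁻¹ * (p - (starRingEnd ℂ) q))
      + Complex.normSq (2⁻¹ * (p + (starRingEnd ℂ) q))
      = (Complex.normSq p + Complex.normSq q) / 2 := by
  simp only [Complex.normSq_mul, Complex.normSq_add, Complex.normSq_sub, Complex.normSq_conj,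
    Complex.normSq_inv, Complex.normSq_I, Complex.normSq_mul]
  have h1 : Complex.normSq (2:ℂ) = 4 := by simp [Complex.normSq_apply]; norm_num
  have h2 : (starRingEnd ℂ) ((starRingEnd ℂ) q) = q := Complex.conj_conj q
  rw [h1, h2]
  ring

/-- The elementary core inequality: for any complex square matrix `Y`,
`tr((Im Y)²) + (tr(Re Y))² ≤ (∑ᵢ ‖rowᵢ Y‖)²`. -/
lemma core_ineq {n : ℕ} (Y : Matrix (Fin n) (Fin n) ℂ) :
    ((matIm Y * matIm Y).trace).re + (((matRe Y).trace).re) ^ 2 ≤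
      (∑ i, Real.sqrt (∑ j, Complex.normSq (Y i j))) ^ 2 := by
  set a : Fin n → ℝ := fun i => (Y i i).re with ha
  set r : Fin n → ℝ := fun i => Real.sqrt (∑ j, Complex.normSq (Y i j)) with hr
  have hrnn : ∀ i, 0 ≤ r i := fun i => Real.sqrt_nonneg _
  have hr2 : ∀ i, r i ^ 2 = ∑ j, Complex.normSq (Y i j) := fun i =>
    Real.sq_sqrt (Finset.sum_nonneg fun j _ => Complex.normSq_nonneg _)
  have har : ∀ i, |a i| ≤ r i := by
    intro i
    rw [hr, ← Real.sqrt_sq_eq_abs]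
    apply Real.sqrt_le_sqrt
    calc (a i)^2 ≤ Complex.normSq (Y i i) := by
          rw [Complex.normSq_apply]; nlinarith [sq_nonneg (Y i i).im]
      _ ≤ ∑ j, Complex.normSq (Y i j) :=
          Finset.single_le_sum (fun j _ => Complex.normSq_nonneg _) (Finset.mem_univ i)
  -- trace of Re part
  have hReTr : ((matRe Y).trace).re = ∑ i, a i := by
    have : (matRe Y).trace = (2⁻¹ : ℂ) * (Y.trace + (starRingEnd ℂ) Y.trace) := by
      rw [matRe, trace_smul, trace_add, trace_conjTranspose, smul_eq_mul]
      rfl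
    rw [this, Complex.add_conj]
    simp [Matrix.trace, Matrix.diag, Complex.re_sum]
    rfl
  -- trace of (Im Y)^2
  have hImH : ∀ i j, matIm Y j i = (starRingEnd ℂ) (matIm Y i j) := by
    intro i j
    have := congrFun (congrFun (matIm_herm' Y) j) i
    rw [conjTranspose_apply] at this
    exact this.symm
  have hImTr : ((matIm Y * matIm Y).trace).re
      = ∑ i, ∑ j, Complex.normSq (matIm Y i j) := by
    have : (matIm Y * matIm Y).trace
        = ∑ i, ∑ j, (Complex.normSq (matIm Y i j) : ℂ) := by
      rw [Matrix.trace]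
      apply Finset.sum_congr rfl
      intro i _
      rw [Matrix.diag, Matrix.mul_apply]
      apply Finset.sum_congr rfl
      intro j _
      rw [hImH i j, Complex.mul_conj]
    rw [this]
    simp [Complex.re_sum]
  -- entrywise identity summed
  have hEntry : ∀ i j, Complex.normSq (matIm Y i j) + Complex.normSq (matRe Y i j)
      = (Complex.normSq (Y i j) + Complex.normSq (Y j i)) / 2 := by
    intro i j
    have h1 : matIm Y i j = (2 * Complex.I)⁻¹ * (Y i j - (starRingEnd ℂ) (Y j i)) := by
      simp [matIm, Matrix.sub_apply, conjTranspose_apply]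
    have h2 : matRe Y i j = (2⁻¹ : ℂ) * (Y i j + (starRingEnd ℂ) (Y j i)) := by
      simp [matRe, Matrix.add_apply, conjTranspose_apply]
    rw [h1, h2, entry_id']
  have hdiagRe : ∀ i, Complex.normSq (matRe Y i i) = a i ^ 2 := by
    intro i
    have h2 : matRe Y i i = ((Y i i).re : ℂ) := by
      simp [matRe, Matrix.add_apply, conjTranspose_apply]
      rw [Complex.add_conj]
      push_cast
      ring
    rw [h2, Complex.normSq_ofReal, ha, sq]
  -- sum of Im normSq ≤ ∑ r² − ∑ a²
  have hImSum : ∑ i, ∑ j, Complex.normSq (matIm Y i j)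
      ≤ (∑ i, r i ^ 2) - ∑ i, a i ^ 2 := by
    have hsum : (∑ i, ∑ j, Complex.normSq (matIm Y i j))
        + ∑ i, ∑ j, Complex.normSq (matRe Y i j)
        = ∑ i, ∑ j, Complex.normSq (Y i j) := by
      rw [← Finset.sum_add_distrib]
      have : ∀ i : Fin n, (∑ j, Complex.normSq (matIm Y i j))
          + ∑ j, Complex.normSq (matRe Y i j)
          = ∑ j, (Complex.normSq (Y i j) + Complex.normSq (Y j i)) / 2 := by
        intro i
        rw [← Finset.sum_add_distrib]
        exact Finset.sum_congr rfl fun j _ => hEntry i j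
      rw [Finset.sum_congr rfl fun i _ => this i]
      have hswap : ∑ i : Fin n, ∑ j : Fin n, Complex.normSq (Y j i) / 2
          = ∑ i : Fin n, ∑ j : Fin n, Complex.normSq (Y i j) / 2 := Finset.sum_comm
      have hhalf : ∑ i : Fin n, ∑ j : Fin n, Complex.normSq (Y i j) / 2
          = (∑ i : Fin n, ∑ j : Fin n, Complex.normSq (Y i j)) / 2 := by
        simp [Finset.sum_div]
      simp only [add_div, Finset.sum_add_distrib]
      linarith
    have hdiag : ∑ i, a i ^ 2 ≤ ∑ i, ∑ j, Complex.normSq (matRe Y i j) := by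
      calc ∑ i, a i ^ 2 = ∑ i, Complex.normSq (matRe Y i i) := by
            exact Finset.sum_congr rfl fun i _ => (hdiagRe i).symm
        _ ≤ ∑ i, ∑ j, Complex.normSq (matRe Y i j) :=
            Finset.sum_le_sum fun i _ =>
              Finset.single_le_sum (fun j _ => Complex.normSq_nonneg _) (Finset.mem_univ i)
    have hr2sum : ∑ i, r i ^ 2 = ∑ i, ∑ j, Complex.normSq (Y i j) :=
      Finset.sum_congr rfl fun i _ => hr2 i
    linarith
  -- (∑a)² − ∑a² ≤ (∑r)² − ∑r²
  have hcross : (∑ i, a i) ^ 2 - ∑ i, a i ^ 2 ≤ (∑ i, r i) ^ 2 - ∑ i, r i ^ 2 := by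
    have hA : (∑ i, a i) ^ 2 = ∑ p ∈ Finset.univ ×ˢ (Finset.univ : Finset (Fin n)),
        a p.1 * a p.2 := by
      rw [sq, Finset.sum_mul_sum, Finset.sum_product]
    have hR : (∑ i, r i) ^ 2 = ∑ p ∈ Finset.univ ×ˢ (Finset.univ : Finset (Fin n)),
        r p.1 * r p.2 := by
      rw [sq, Finset.sum_mul_sum, Finset.sum_product]
    have hsub : ∑ p ∈ (Finset.univ : Finset (Fin n)).diag, (r p.1 * r p.2 - a p.1 * a p.2)
        ≤ ∑ p ∈ Finset.univ ×ˢ (Finset.univ : Finset (Fin n)),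
          (r p.1 * r p.2 - a p.1 * a p.2) := by
      apply Finset.sum_le_sum_of_subset_of_nonneg
      · intro p hp
        simp [Finset.mem_product]
      · intro p _ _
        have h1 : a p.1 * a p.2 ≤ r p.1 * r p.2 := by
          calc a p.1 * a p.2 ≤ |a p.1 * a p.2| := le_abs_self _
            _ = |a p.1| * |a p.2| := abs_mul _ _
            _ ≤ r p.1 * r p.2 :=
                mul_le_mul (har _) (har _) (abs_nonneg _) (hrnn _)
        linarith
    have e1 : ∑ p ∈ (Finset.univ : Finset (Fin n)).diag,
        (r p.1 * r p.2 - a p.1 * a p.2) = ∑ i, r i ^ 2 - ∑ i, a i ^ 2 := by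
      rw [Finset.sum_diag]
      simp only [← sq]
      rw [Finset.sum_sub_distrib]
    have e2 : ∑ p ∈ Finset.univ ×ˢ (Finset.univ : Finset (Fin n)),
        (r p.1 * r p.2 - a p.1 * a p.2) = (∑ i, r i) ^ 2 - (∑ i, a i) ^ 2 := by
      rw [Finset.sum_sub_distrib, ← hA, ← hR]
    rw [e1, e2] at hsub
    linarith
  rw [hImTr, hReTr]
  nlinarith [hImSum, hcross]

/-- The conjugation of `X` by the eigenvector unitary of `X * Xᴴ`. -/
def Ymat {n : ℕ} (X : Matrix (Fin n) (Fin n) ℂ) : Matrix (Fin n) (Fin n) ℂ :=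
  star ((Matrix.posSemidef_self_mul_conjTranspose X).1.eigenvectorUnitary :
      Matrix (Fin n) (Fin n) ℂ) * X *
    ((Matrix.posSemidef_self_mul_conjTranspose X).1.eigenvectorUnitary :
      Matrix (Fin n) (Fin n) ℂ)

lemma traceAbs_eq' {n : ℕ} (X : Matrix (Fin n) (Fin n) ℂ) :
    traceAbs X
      = ∑ i, Real.sqrt ((Matrix.posSemidef_self_mul_conjTranspose X).1.eigenvalues i) := by
  set hH := Matrix.posSemidef_self_mul_conjTranspose X
  have hU' : star (hH.1.eigenvectorUnitary : Matrix (Fin n) (Fin n) ℂ)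
      * (hH.1.eigenvectorUnitary : Matrix (Fin n) (Fin n) ℂ) = 1 :=
    Matrix.mem_unitaryGroup_iff'.mp hH.1.eigenvectorUnitary.2
  rw [traceAbs, Matrix.trace_mul_cycle, hU', one_mul, trace_diagonal]
  simp [Complex.re_sum]

lemma conj_facts' {n : ℕ} (X : Matrix (Fin n) (Fin n) ℂ) :
    (∀ i, (Matrix.posSemidef_self_mul_conjTranspose X).1.eigenvalues i
        = ∑ j, Complex.normSq (Ymat X i j)) ∧
    (matRe (Ymat X)).trace = (matRe X).trace ∧
    (matIm (Ymat X) * matIm (Ymat X)).trace = (matIm X * matIm X).trace := by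
  set hH := Matrix.posSemidef_self_mul_conjTranspose X with hHdef
  set U : Matrix (Fin n) (Fin n) ℂ := (hH.1.eigenvectorUnitary : Matrix (Fin n) (Fin n) ℂ)
    with hUdef
  have hYdef : Ymat X = star U * X * U := rfl
  have hU : U * star U = 1 := (Matrix.mem_unitaryGroup_iff).mp hH.1.eigenvectorUnitary.2
  have hU' : star U * U = 1 := Matrix.mem_unitaryGroup_iff'.mp hH.1.eigenvectorUnitary.2
  have hYconj : (Ymat X)ᴴ = star U * Xᴴ * U := by
    rw [hYdef, conjTranspose_mul, conjTranspose_mul, star_eq_conjTranspose,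
      conjTranspose_conjTranspose, mul_assoc]
  have htr : ∀ A : Matrix (Fin n) (Fin n) ℂ, (star U * A * U).trace = A.trace := by
    intro A
    rw [Matrix.trace_mul_cycle, hU, one_mul]
  have hmulconj : ∀ A B : Matrix (Fin n) (Fin n) ℂ,
      (star U * A * U) * (star U * B * U) = star U * (A * B) * U := by
    intro A B
    calc (star U * A * U) * (star U * B * U)
        = star U * A * (U * star U) * B * U := by
          simp only [mul_assoc]
      _ = star U * (A * B) * U := by rw [hU]; simp only [mul_assoc, one_mul]
  have hReY : matRe (Ymat X) = star U * matRe X * U := by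
    rw [hYdef, matRe, matRe, ← hYdef, hYconj, hYdef, Matrix.mul_smul, Matrix.smul_mul,
      mul_add, add_mul]
  have hImY : matIm (Ymat X) = star U * matIm X * U := by
    rw [hYdef, matIm, matIm, ← hYdef, hYconj, hYdef, Matrix.mul_smul, Matrix.smul_mul,
      mul_sub, sub_mul]
  refine ⟨?_, ?_, ?_⟩
  · intro i
    have hYY : Ymat X * (Ymat X)ᴴ = diagonal (RCLike.ofReal ∘ hH.1.eigenvalues) := by
      rw [hYconj, hYdef]
      calc (star U * X * U) * (star U * Xᴴ * U)
          = star U * (X * Xᴴ) * U := hmulconj X Xᴴ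
        _ = diagonal (RCLike.ofReal ∘ hH.1.eigenvalues) :=
            (Unitary.conjStarAlgAut_star_apply (S := ℂ) _ _).symm.trans
              hH.1.conjStarAlgAut_star_eigenvectorUnitary
    have h1 : (Ymat X * (Ymat X)ᴴ) i i = (hH.1.eigenvalues i : ℂ) := by
      rw [hYY]; simp
    have h2 : (Ymat X * (Ymat X)ᴴ) i i
        = ((∑ j, Complex.normSq (Ymat X i j) : ℝ) : ℂ) := by
      rw [Matrix.mul_apply]
      push_cast
      apply Finset.sum_congr rfl
      intro j _
      rw [conjTranspose_apply, Complex.star_def, Complex.mul_conj]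
    exact_mod_cast h1.symm.trans h2
  · rw [hReY, htr]
  · rw [hImY, hmulconj, htr]

/-- For every square complex matrix `X`,
`(tr|X|)² − (tr(Re X))² ≥ tr((Im X)²)`. -/
theorem stmt0 {n : ℕ} (X : Matrix (Fin n) (Fin n) ℂ) :
    ((matIm X * matIm X).trace).re ≤
      traceAbs X ^ 2 - (((matRe X).trace).re) ^ 2 := by
  obtain ⟨heig, hRe, hIm⟩ := conj_facts' X
  have hT : traceAbs X = ∑ i, Real.sqrt (∑ j, Complex.normSq (Ymat X i j)) := by
    rw [traceAbs_eq' X]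
    exact Finset.sum_congr rfl fun i _ => congrArg Real.sqrt (heig i)
  have hcore := core_ineq (Ymat X)
  rw [hRe, hIm] at hcore
  rw [hT]
  linarith

end
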